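/- arXiv:2112.11863 — 3 statements merged into one kernel-verified Lean document; each statement's English description precedes it below -/
import Mathlib

section
/- With H(x,y) = (ν*x+y)*((ν*x-y)*(a1 - a3*x*y) - 2*(1-ν)*(a0 - a4*x^2*y^2)) and F(x,y) = X(x)*y^2 - x^2*Y(y) where X(x) = a0 + a1*x + a2*x^2 + a3*x^3 + a4*x^4 and Y(y) = a0 + a1*y + a2*y^2 + a3*y^3 + a4*y^4, the identity x*∂H/∂x - y*∂H/∂y = -2*(1-ν)*F*(ν*x+y)/(x-y)^2 + 2*H*(ν*x^2+y^2)/((x-y)*(ν*x+y)) holds whenever x ≠ y and ν*x + y ≠ 0. -/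
/-!
The partial derivatives of `H` come from the product rule applied to its factorization
`(ν x + y) · (…)`; after multiplying by `(x - y)² (ν x + y)` the flow identity becomes a
polynomial identity, checked by `ring`.
-/

/-- The quartic metric function `X` (also giving `Y` when evaluated at `y`). -/
def Xq (a0 a1 a2 a3 a4 t : ℝ) : ℝ := a0 + a1*t + a2*t^2 + a3*t^3 + a4*t^4

/-- The Chen-Teo metric function `F`. -/
def Fq (a0 a1 a2 a3 a4 x y : ℝ) : ℝ :=
  Xq a0 a1 a2 a3 a4 x * y^2 - x^2 * Xq a0 a1 a2 a3 a4 y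

/-- The Chen-Teo metric function `H`. -/
def Hq (ν a0 a1 a3 a4 x y : ℝ) : ℝ :=
  (ν*x + y)*((ν*x - y)*(a1 - a3*x*y) - 2*(1 - ν)*(a0 - a4*x^2*y^2))

def HqDx (ν a0 a1 a3 a4 x y : ℝ) : ℝ :=
  ν * ((ν*x - y)*(a1 - a3*x*y) - 2*(1 - ν)*(a0 - a4*x^2*y^2))
    + (ν*x + y) * (ν*(a1 - a3*x*y) - a3*y*(ν*x - y) + 4*(1 - ν)*a4*x*y^2)

def HqDy (ν a0 a1 a3 a4 x y : ℝ) : ℝ :=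
  ((ν*x - y)*(a1 - a3*x*y) - 2*(1 - ν)*(a0 - a4*x^2*y^2))
    + (ν*x + y) * (-(a1 - a3*x*y) - a3*x*(ν*x - y) + 4*(1 - ν)*a4*x^2*y)

lemma hasDerivAt_Hq_fst (ν a0 a1 a3 a4 x y : ℝ) :
    HasDerivAt (fun t : ℝ => Hq ν a0 a1 a3 a4 t y) (HqDx ν a0 a1 a3 a4 x y) x := by
  have hid := hasDerivAt_id' x
  have hQ := ((hid.const_mul ν).sub_const y).fun_mul
      (((hid.const_mul a3).mul_const y).const_sub a1)
    |>.fun_sub ((((hid.fun_pow 2).const_mul a4).mul_const (y^2)).const_sub a0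
      |>.const_mul (2*(1 - ν)))
  exact (((hid.const_mul ν).add_const y).fun_mul hQ).congr_deriv (by unfold HqDx; ring)

lemma hasDerivAt_Hq_snd (ν a0 a1 a3 a4 x y : ℝ) :
    HasDerivAt (fun s : ℝ => Hq ν a0 a1 a3 a4 x s) (HqDy ν a0 a1 a3 a4 x y) y := by
  have hid := hasDerivAt_id' y
  have hQ := ((hid.const_sub (ν*x)).fun_mul ((hid.const_mul (a3*x)).const_sub a1))
    |>.fun_sub ((((hid.fun_pow 2).const_mul (a4*x^2)).const_sub a0).const_mul (2*(1 - ν)))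
  exact ((hid.const_add (ν*x)).fun_mul hQ).congr_deriv (by unfold HqDy; ring)

lemma Hq_flow_identity_cleared (ν a0 a1 a2 a3 a4 x y : ℝ) :
    (x - y)^2 * (ν*x + y) * (x * HqDx ν a0 a1 a3 a4 x y - y * HqDy ν a0 a1 a3 a4 x y)
      = -2*(1 - ν) * Fq a0 a1 a2 a3 a4 x y * (ν*x + y)^2
        + 2 * Hq ν a0 a1 a3 a4 x y * (ν*x^2 + y^2) * (x - y) := by
  unfold HqDx HqDy Hq Fq Xq; ring

theorem chenTeo_H_flow_identity (ν a0 a1 a2 a3 a4 x y : ℝ)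
    (hxy : x ≠ y) (hν : ν*x + y ≠ 0) :
    x * deriv (fun t : ℝ => Hq ν a0 a1 a3 a4 t y) x
      - y * deriv (fun s : ℝ => Hq ν a0 a1 a3 a4 x s) y
    = -2*(1 - ν) * Fq a0 a1 a2 a3 a4 x y * (ν*x + y)/(x - y)^2
      + 2 * Hq ν a0 a1 a3 a4 x y * (ν*x^2 + y^2)/((x - y)*(ν*x + y)) := by
  rw [(hasDerivAt_Hq_fst ν a0 a1 a3 a4 x y).deriv, (hasDerivAt_Hq_snd ν a0 a1 a3 a4 x y).deriv]
  have hxy' : x - y ≠ 0 := sub_ne_zero.mpr hxy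
  rw [div_add_div _ _ (pow_ne_zero 2 hxy') (mul_ne_zero hxy' hν),
    eq_div_iff (mul_ne_zero (pow_ne_zero 2 hxy') (mul_ne_zero hxy' hν))]
  -- the common denominator is `(x - y)³ (ν x + y)`, one factor `x - y` more than in the lemma
  linear_combination (x - y) * Hq_flow_identity_cleared ν a0 a1 a2 a3 a4 x y
end

section
/- Let Ψ0, Ψ2 be complex with Ψ4 = conj(Ψ0), Ψ2 real, and suppose Ψ0 = 3*(f/conj(f))*Ψ2 for some nonzero complex number f. Set e^{iψ} = (Ψ0/conj(Ψ0))^{1/4}. Then the transformed scalars Ψ̂0 = (1/4)Ψ0 + (1/4)e^{4iψ}conj(Ψ0) - (1/2)e^{2iψ}(Ψ0 conj(Ψ0))^{1/2} and Ψ̂1 = -(Ψ0 - e^{4iψ}conj(Ψ0))/(4e^{iψ}) both vanish, and Ψ̂2 = (2Ψ0 + 2e^{4iψ}conj(Ψ0) + (4/3)e^{2iψ}(Ψ0 conj(Ψ0))^{1/2})/(8e^{2iψ}) equals -2Ψ2. -/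
/- With `e² = Ψ0/|Ψ0|` one has `e² |Ψ0| = Ψ0` and `e⁴ conj Ψ0 = Ψ0`, so all three rotated scalars
are multiples of `Ψ0`, and the first two collapse to `0`. The third is `(2/3) Ψ0 / e² = (2/3) |Ψ0|`,
and `|Ψ0| = -3 Ψ2` because `f / star f` is a phase and `Ψ2 < 0`. -/

theorem Complex.norm_div_star_self (z : ℂ) (hz : z ≠ 0) : ‖z / star z‖ = 1 := by
  rw [norm_div, norm_star, div_self (norm_ne_zero_iff.mpr hz)]

theorem Complex.norm_mul_div_star_mul_ofReal (c f : ℂ) (r : ℝ) (hf : f ≠ 0) :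
    ‖c * (f / star f) * (r : ℂ)‖ = ‖c‖ * |r| := by
  rw [norm_mul, norm_mul, Complex.norm_div_star_self f hf, Complex.norm_real, Real.norm_eq_abs,
    mul_one]

section PhaseSquareRoot

variable {z e : ℂ} (he : e ^ 2 = z / (‖z‖ : ℂ))
include he

theorem sq_mul_norm_eq_of_sq_eq_div_norm : e ^ 2 * ‖z‖ = z := by
  rcases eq_or_ne z 0 with rfl | hz
  · simp at he ⊢
  · rw [he, div_mul_cancel₀ _ (Complex.ofReal_ne_zero.mpr (norm_ne_zero_iff.mpr hz))]

theorem pow_four_mul_star_eq_of_sq_eq_div_norm : e ^ 4 * star z = z := by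
  have hsq : (‖z‖ : ℂ) ^ 2 = z * star z := by
    rw [Complex.star_def, Complex.mul_conj, Complex.normSq_eq_norm_sq]; push_cast; ring
  have h := sq_mul_norm_eq_of_sq_eq_div_norm he
  rcases eq_or_ne z 0 with rfl | hz
  · simp
  · apply mul_left_cancel₀ hz
    linear_combination (e ^ 2 * ‖z‖ + z) * h - e ^ 4 * hsq

theorem div_sq_eq_norm_of_sq_eq_div_norm (hz : z ≠ 0) : z / e ^ 2 = ‖z‖ := by
  have h := sq_mul_norm_eq_of_sq_eq_div_norm he
  have he2 : e ^ 2 ≠ 0 := by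
    rintro h0
    exact hz (by rw [← h, h0, zero_mul])
  rw [div_eq_iff he2, mul_comm]
  exact h.symm

end PhaseSquareRoot

/-- The tetrad rotation into adapted form: with `Ψ4 = conj Ψ0`, `Ψ2` real and negative
(as for the Chen-Teo instanton), `Ψ0 = 3 (f/conj f) Ψ2` for some nonzero `f`, and
`e = e^{iψ} = (Ψ0/conj Ψ0)^{1/4}` (so that `e² = Ψ0/|Ψ0|`), the rotated Weyl scalars
`Ψ̂0` and `Ψ̂1` vanish and `Ψ̂2 = -2Ψ2`. -/
theorem adapted_tetrad_rotation (f Ψ0 e : ℂ) (Ψ2 : ℝ)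
    (hf : f ≠ 0) (hΨ2 : Ψ2 < 0)
    (hΨ0 : Ψ0 = 3 * (f / star f) * (Ψ2 : ℂ))
    (he : e^2 = Ψ0 / ((‖Ψ0‖ : ℝ) : ℂ)) :
    (1/4)*Ψ0 + (1/4)*e^4*star Ψ0 - (1/2)*e^2*((‖Ψ0‖ : ℝ) : ℂ) = 0 ∧
    -(Ψ0 - e^4*star Ψ0)/(4*e) = 0 ∧
    (2*Ψ0 + 2*e^4*star Ψ0 + (4/3)*e^2*((‖Ψ0‖ : ℝ) : ℂ))/(8*e^2) = -2*(Ψ2 : ℂ) := by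
  have hnorm : ‖Ψ0‖ = -3 * Ψ2 := by
    rw [hΨ0, Complex.norm_mul_div_star_mul_ofReal _ f Ψ2 hf, abs_of_neg hΨ2]
    norm_num
  have hΨ0ne : Ψ0 ≠ 0 := by
    rw [← norm_ne_zero_iff, hnorm]
    linarith
  have he2 := sq_mul_norm_eq_of_sq_eq_div_norm he
  have he4 : e ^ 4 * star Ψ0 = Ψ0 := pow_four_mul_star_eq_of_sq_eq_div_norm he
  refine ⟨by linear_combination (1/4) * he4 - (1/2) * he2, ?_, ?_⟩
  · rw [he4, sub_self, neg_zero, zero_div]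
  · calc (2*Ψ0 + 2*e^4*star Ψ0 + (4/3)*e^2*((‖Ψ0‖ : ℝ) : ℂ))/(8*e^2)
        = (2/3) * (Ψ0 / e^2) := by rw [mul_assoc 2, he4, mul_assoc (4/3), he2]; ring
      _ = -2*(Ψ2 : ℂ) := by
        rw [div_sq_eq_norm_of_sq_eq_div_norm he hΨ0ne, hnorm]; push_cast; ring
end

section
/- Let ξ ∈ (1/2, 1/√2) and x2 < 0 be real. Define ν = -2ξ², x1 = -ξ(1 - 2ξ + 2ξ²)x2/(1 - 2ξ), x3 = (1 - 2ξ + 2ξ²)x2/(4ξ²(1-ξ)), x4 = 0. Then x1 < x2 < x3 < 0 = x4. -/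
/-!
Both `x1` and `x3` are multiples of `x2 < 0`, so the ordering amounts to the ratio `x1 / x2`
exceeding `1` and `x3 / x2` lying in `(0, 1)`. Clearing denominators, these reduce to the
factorisations `(1 - 2ξ) + ξ(1 - 2ξ + 2ξ²) = (1 - ξ)(1 - 2ξ²)` and
`4ξ²(1 - ξ) - (1 - 2ξ + 2ξ²) = (2ξ - 1)(1 - 2ξ²)`, whose factors are positive precisely because
`1/2 < ξ < 1/√2`.
-/

open Real

section RootRatios

variable {ξ : ℝ}

lemma two_mul_sq_lt_one_of_lt_inv_sqrt_two (h0 : 0 ≤ ξ) (h : ξ < 1 / √2) : 2 * ξ ^ 2 < 1 := by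
  have hsq : ξ ^ 2 < (1 / √2) ^ 2 := pow_lt_pow_left₀ h h0 two_ne_zero
  rw [div_pow, sq_sqrt zero_le_two] at hsq
  linarith

lemma lt_one_of_half_lt_of_two_mul_sq_lt_one (h1 : 1 / 2 < ξ) (h2 : 2 * ξ ^ 2 < 1) : ξ < 1 := by
  nlinarith

lemma one_sub_two_mul_add_two_mul_sq_pos : 0 < 1 - 2 * ξ + 2 * ξ ^ 2 := by
  nlinarith [sq_nonneg (2 * ξ - 1)]

lemma one_lt_chenTeo_ratio₁ (h1 : 1 / 2 < ξ) (h2 : 2 * ξ ^ 2 < 1) :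
    1 < -(ξ * (1 - 2 * ξ + 2 * ξ ^ 2)) / (1 - 2 * ξ) := by
  have hξ1 := lt_one_of_half_lt_of_two_mul_sq_lt_one h1 h2
  have key : (1 - 2 * ξ) + ξ * (1 - 2 * ξ + 2 * ξ ^ 2) = (1 - ξ) * (1 - 2 * ξ ^ 2) := by ring
  have hpos : 0 < (1 - ξ) * (1 - 2 * ξ ^ 2) := mul_pos (by linarith) (by linarith)
  rw [lt_div_iff_of_neg (by linarith)]
  linarith

lemma chenTeo_ratio₃_pos (h1 : 1 / 2 < ξ) (h2 : 2 * ξ ^ 2 < 1) :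
    0 < (1 - 2 * ξ + 2 * ξ ^ 2) / (4 * ξ ^ 2 * (1 - ξ)) := by
  have hξ1 := lt_one_of_half_lt_of_two_mul_sq_lt_one h1 h2
  exact div_pos one_sub_two_mul_add_two_mul_sq_pos (by positivity [sub_pos.mpr hξ1])

lemma chenTeo_ratio₃_lt_one (h1 : 1 / 2 < ξ) (h2 : 2 * ξ ^ 2 < 1) :
    (1 - 2 * ξ + 2 * ξ ^ 2) / (4 * ξ ^ 2 * (1 - ξ)) < 1 := by
  have hξ1 := lt_one_of_half_lt_of_two_mul_sq_lt_one h1 h2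
  have key : 4 * ξ ^ 2 * (1 - ξ) - (1 - 2 * ξ + 2 * ξ ^ 2) = (2 * ξ - 1) * (1 - 2 * ξ ^ 2) := by
    ring
  have hpos : 0 < (2 * ξ - 1) * (1 - 2 * ξ ^ 2) := mul_pos (by linarith) (by linarith)
  rw [div_lt_one (by positivity [sub_pos.mpr hξ1])]
  linarith

end RootRatios

/-- Ordering of the quartic roots in the parametrization of the Chen-Teo
2-parameter instanton family. -/
theorem chenTeo_root_ordering (ξ x2 : ℝ)
    (hξ : ξ ∈ Set.Ioo (1/2 : ℝ) (1/Real.sqrt 2)) (hx2 : x2 < 0)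
    (x1 x3 x4 : ℝ)
    (hx1 : x1 = -(ξ*(1 - 2*ξ + 2*ξ^2)*x2)/(1 - 2*ξ))
    (hx3 : x3 = (1 - 2*ξ + 2*ξ^2)*x2/(4*ξ^2*(1 - ξ)))
    (hx4 : x4 = 0) :
    x1 < x2 ∧ x2 < x3 ∧ x3 < 0 ∧ 0 = x4 := by
  obtain ⟨hξ_lo, hξ_hi⟩ := hξ
  have hsq := two_mul_sq_lt_one_of_lt_inv_sqrt_two (by linarith) hξ_hi
  have e1 : x1 = -(ξ * (1 - 2 * ξ + 2 * ξ ^ 2)) / (1 - 2 * ξ) * x2 := by rw [hx1]; ring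
  have e3 : x3 = (1 - 2 * ξ + 2 * ξ ^ 2) / (4 * ξ ^ 2 * (1 - ξ)) * x2 := by rw [hx3]; ring
  refine ⟨?_, ?_, ?_, hx4.symm⟩
  · rw [e1]
    exact mul_lt_of_one_lt_left hx2 (one_lt_chenTeo_ratio₁ hξ_lo hsq)
  · rw [e3]
    exact lt_mul_of_lt_one_left hx2 (chenTeo_ratio₃_lt_one hξ_lo hsq)
  · rw [e3]
    exact mul_neg_of_pos_of_neg (chenTeo_ratio₃_pos hξ_lo hsq) hx2
end
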